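/- Let j be a complex structure on V (j² = -I), F ⊆ W ⊆ V subspaces, and J the endomorphism of V ⊕ V* given by J(X,ξ) = (jX, -j*ξ). If V = W ⊕ j(F) (the Guillemin–Sternberg condition), then J(F ⊕ W⁰) ∩ (W ⊕ F⁰) = 0, where F⁰, W⁰ ⊆ V* are the annihilators of F and W. -/

import Mathlib

open Module LinearMap

set_option maxSynthPendingDepth 3

/-- The generalized complex structure `J(X,ξ) = (jX, -j*ξ)` on `V ⊕ V*`
associated to a complex structure `j` on `V`. -/
noncomputable def Jcx (V : Type) [AddCommGroup V] [Module ℝ V]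
    (j : V →ₗ[ℝ] V) :
    (V × Module.Dual ℝ V) →ₗ[ℝ] (V × Module.Dual ℝ V) :=
  LinearMap.prod
    (j ∘ₗ LinearMap.fst ℝ V (Module.Dual ℝ V))
    (-(j.dualMap ∘ₗ LinearMap.snd ℝ V (Module.Dual ℝ V)))

namespace Submodule

variable {R M N : Type*} [CommSemiring R] [AddCommMonoid M] [Module R M]
  [AddCommMonoid N] [Module R N]

theorem comap_dualMap_dualAnnihilator (f : M →ₗ[R] N) (p : Submodule R M) :
    p.dualAnnihilator.comap f.dualMap = (p.map f).dualAnnihilator := by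
  ext η
  simp [mem_dualAnnihilator]

/-- `f* η` kills `p` iff `η` kills `f(p)`, so an `η ∈ q⁰` with `f* η ∈ p⁰` kills `q ⊔ f(p) = ⊤`. -/
theorem map_dualMap_dualAnnihilator_inf_dualAnnihilator_eq_bot (f : M →ₗ[R] N)
    {p : Submodule R M} {q : Submodule R N} (h : q ⊔ p.map f = ⊤) :
    q.dualAnnihilator.map f.dualMap ⊓ p.dualAnnihilator = ⊥ := by
  rw [map_inf_eq_map_inf_comap, comap_dualMap_dualAnnihilator, ← dualAnnihilator_sup_eq, h,
    dualAnnihilator_top, map_bot]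

end Submodule

theorem Jcx_eq_prodMap (V : Type) [AddCommGroup V] [Module ℝ V] (j : V →ₗ[ℝ] V) :
    Jcx V j = j.prodMap (-j.dualMap) :=
  rfl

theorem guillemin_sternberg_condition_general
    (V : Type) [AddCommGroup V] [Module ℝ V]
    (j : V →ₗ[ℝ] V)
    (F W : Submodule ℝ V)
    (hsup : W ⊔ Submodule.map j F = ⊤)
    (hinf : W ⊓ Submodule.map j F = ⊥) :
    Submodule.map (Jcx V j) (F.prod W.dualAnnihilator) ⊓
      (W.prod F.dualAnnihilator) = ⊥ := by
  -- `J` is diagonal, so the intersection splits into `j(F) ∩ W` and `j*(W⁰) ∩ F⁰`.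
  rw [Jcx_eq_prodMap, prodMap_map_prod, Submodule.prod_inf_prod, Submodule.prod_eq_bot_iff,
    Submodule.map_neg, inf_comm, hinf]
  exact ⟨rfl, Submodule.map_dualMap_dualAnnihilator_inf_dualAnnihilator_eq_bot j hsup⟩

/-- Linear version of the Guillemin–Sternberg condition: if `j² = -I`,
`F ⊆ W ⊆ V` and `V = W ⊕ j(F)`, then
`J(F ⊕ W⁰) ∩ (W ⊕ F⁰) = 0` for `J(X+ξ) = jX - j*ξ`. -/
theorem guillemin_sternberg_condition
    (V : Type) [AddCommGroup V] [Module ℝ V] [FiniteDimensional ℝ V]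
    (j : V →ₗ[ℝ] V) (hj2 : ∀ x, j (j x) = -x)
    (F W : Submodule ℝ V) (hFW : F ≤ W)
    (hsup : W ⊔ Submodule.map j F = ⊤)
    (hinf : W ⊓ Submodule.map j F = ⊥) :
    Submodule.map (Jcx V j) (F.prod W.dualAnnihilator) ⊓
      (W.prod F.dualAnnihilator) = ⊥ :=
  guillemin_sternberg_condition_general V j F W hsup hinf
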